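/- Suppose $f, f', f'' : \mathbb{R} \to \mathbb{R}$ exist, are bounded and uniformly continuous on $\mathbb{R}$, and $f$ is integrable. For $k \in \mathbb{N}$, $k \ge 1$, the function $u_k(x,t) = P_{kt}(f)(x) = \frac{1}{2kt} \int_{-\infty}^{+\infty} f(x-u)\, e^{-|u|/(kt)}\, du$ solves the initial value problem $\frac{\partial u_k}{\partial t}(x,t) = k^2 t^2 \frac{\partial^3 u_k}{\partial x^2 \partial t}(x,t) + 2 k^2 t\, \frac{\partial^2 u_k}{\partial x^2}(x,t)$ for all $t>0$, $x \in \mathbb{R}$, together with $\lim_{s \searrow 0} u_k(x,s) = f(x)$ for every $x \in \mathbb{R}$. -/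

import Mathlib

/-!
After the substitution `v = s w`, `P_s g (x) = ½ ∫ g (x - s w) e^{-|w|} dw`. In this form both
`x` and `s` can be differentiated under the integral (the derivatives are dominated by multiples
of `e^{-|w|}` and `|w| e^{-|w|}`), and the formula extends continuously to `s = 0` with value
`g x`. Folding the integral onto `(0, ∞)` and integrating by parts twice against `e^{-w}`
(the Laplace transform of `h''` is `L h - h 0 - h' 0`, and `h' 0 = 0` for the even
`h w = g (x - s w) + g (x + s w)`) gives `(P_s g)'' = P_s (g'') = (P_s g - g) / s ^ 2`.
For `u (x, t) = P_{kt} f (x)` this reads `∂ₓ² u = (u - f) / (k t) ^ 2`, and substituting it into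
the right-hand side of the equation turns the equation into the identity `∂ₜ u = ∂ₜ u`.
-/

open MeasureTheory Filter

/-- The Picard convolution operator. -/
noncomputable def picardConv (f : ℝ → ℝ) (s x : ℝ) : ℝ :=
  (1 / (2 * s)) * ∫ v : ℝ, f (x - v) * Real.exp (-|v| / s)

open Real Set Topology

lemma integral_exp_neg_abs : ∫ w : ℝ, exp (-|w|) = 2 := by
  rw [integral_comp_abs (f := fun w => exp (-w)), integral_exp_neg_Ioi_zero, mul_one]

lemma integrable_exp_neg_abs : Integrable fun w : ℝ => exp (-|w|) :=
  .of_integral_ne_zero (by rw [integral_exp_neg_abs]; norm_num)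

lemma integral_abs_mul_exp_neg_abs : ∫ w : ℝ, |w| * exp (-|w|) = 2 := by
  have h := integral_rpow_mul_exp_neg_mul_Ioi (a := 2) (r := 1) two_pos one_pos
  norm_num at h
  rw [integral_comp_abs (f := fun w => w * exp (-w)), h, mul_one]

lemma integrable_abs_mul_exp_neg_abs : Integrable fun w : ℝ => |w| * exp (-|w|) :=
  .of_integral_ne_zero (by rw [integral_abs_mul_exp_neg_abs]; norm_num)

lemma integrable_mul_exp_neg_abs {φ : ℝ → ℝ} {M : ℝ} (hφ : Continuous φ) (hM : ∀ w, |φ w| ≤ M) :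
    Integrable fun w => φ w * exp (-|w|) :=
  integrable_exp_neg_abs.bdd_mul hφ.aestronglyMeasurable (ae_of_all _ hM)

lemma integral_eq_integral_Ioi_add_comp_neg {E : Type*} [NormedAddCommGroup E] [NormedSpace ℝ E]
    {h : ℝ → E} (hh : Integrable h) : ∫ w, h w = ∫ w in Ioi 0, (h w + h (-w)) := by
  rw [← integral_add_compl measurableSet_Ioi hh, compl_Ioi,
    integral_add hh.integrableOn hh.comp_neg.integrableOn, integral_comp_neg_Ioi, neg_zero]

lemma integral_mul_exp_neg_abs_eq_integral_Ioi {φ : ℝ → ℝ}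
    (hφ : Integrable fun w => φ w * exp (-|w|)) :
    ∫ w, φ w * exp (-|w|) = ∫ w in Ioi 0, (φ w + φ (-w)) * exp (-w) := by
  rw [integral_eq_integral_Ioi_add_comp_neg hφ]
  refine setIntegral_congr_fun measurableSet_Ioi fun w hw => ?_
  simp only [abs_neg, abs_of_pos (mem_Ioi.mp hw)]
  ring

lemma integral_Ioi_deriv_mul_exp_neg_mul {h h' : ℝ → ℝ} {M M' p : ℝ} (hp : 0 < p)
    (hderiv : ∀ v, HasDerivAt h (h' v) v) (hM : ∀ v, |h v| ≤ M)
    (hh' : Continuous h') (hM' : ∀ v, |h' v| ≤ M') :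
    ∫ v in Ioi 0, h' v * exp (-p * v) = p * (∫ v in Ioi 0, h v * exp (-p * v)) - h 0 := by
  have hexp : IntegrableOn (fun v => exp (-p * v)) (Ioi 0) := exp_neg_integrableOn_Ioi 0 hp
  have hcont : Continuous h := continuous_iff_continuousAt.2 fun v => (hderiv v).continuousAt
  have hint : IntegrableOn (fun v => h v * exp (-p * v)) (Ioi 0) :=
    hexp.bdd_mul hcont.aestronglyMeasurable (ae_of_all _ hM)
  have hint' : IntegrableOn (fun v => h' v * exp (-p * v)) (Ioi 0) :=
    hexp.bdd_mul hh'.aestronglyMeasurable (ae_of_all _ hM')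
  have hF : ∀ v ∈ Ici (0 : ℝ), HasDerivAt (fun v => h v * exp (-p * v))
      (h' v * exp (-p * v) - p * (h v * exp (-p * v))) v := fun v _ => by
    refine ((hderiv v).mul ((hasDerivAt_id' v).const_mul (-p)).exp).congr_deriv ?_
    ring
  have hdecay : Tendsto (fun v => h v * exp (-p * v)) atTop (𝓝 0) := by
    have hexp0 : Tendsto (fun v => M * exp (-p * v)) atTop (𝓝 0) := by
      simpa using ((tendsto_exp_atBot.comp
        (tendsto_id.const_mul_atTop_of_neg (neg_neg_of_pos hp))).const_mul M)
    refine squeeze_zero_norm (fun v => ?_) hexp0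
    rw [norm_mul, Real.norm_eq_abs, Real.norm_of_nonneg (exp_pos _).le]
    exact mul_le_mul_of_nonneg_right (hM v) (exp_pos _).le
  have key := integral_Ioi_of_hasDerivAt_of_tendsto' hF (hint'.sub (hint.const_mul p)) hdecay
  rw [integral_sub hint' (hint.const_mul p), integral_const_mul] at key
  simp only [mul_zero, exp_zero, mul_one, zero_sub] at key
  linarith

lemma integral_Ioi_deriv_deriv_mul_exp_neg_mul {h h' h'' : ℝ → ℝ} {M M' M'' p : ℝ} (hp : 0 < p)
    (hderiv : ∀ v, HasDerivAt h (h' v) v) (hderiv' : ∀ v, HasDerivAt h' (h'' v) v)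
    (hM : ∀ v, |h v| ≤ M) (hM' : ∀ v, |h' v| ≤ M') (hh'' : Continuous h'')
    (hM'' : ∀ v, |h'' v| ≤ M'') :
    ∫ v in Ioi 0, h'' v * exp (-p * v) =
      p ^ 2 * (∫ v in Ioi 0, h v * exp (-p * v)) - p * h 0 - h' 0 := by
  have hh' : Continuous h' := continuous_iff_continuousAt.2 fun v => (hderiv' v).continuousAt
  rw [integral_Ioi_deriv_mul_exp_neg_mul hp hderiv' hM' hh'' hM'',
    integral_Ioi_deriv_mul_exp_neg_mul hp hderiv hM hh' hM']
  ring

section Bounded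

variable {g : ℝ → ℝ} {M₀ M₁ M₂ : ℝ}

lemma hasDerivAt_integral_shift_mul_exp_neg_abs (hg : Differentiable ℝ g)
    (hM₀ : ∀ y, |g y| ≤ M₀) (hg' : Continuous (deriv g)) (hM₁ : ∀ y, |deriv g y| ≤ M₁)
    (s x : ℝ) :
    HasDerivAt (fun y => ∫ w, g (y - s * w) * exp (-|w|))
      (∫ w, deriv g (x - s * w) * exp (-|w|)) x := by
  have hgc := hg.continuous
  refine (hasDerivAt_integral_of_dominated_loc_of_deriv_le
    (F := fun y w => g (y - s * w) * exp (-|w|))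
    (F' := fun y w => deriv g (y - s * w) * exp (-|w|)) (bound := fun w => M₁ * exp (-|w|))
    univ_mem (Eventually.of_forall fun y => (by fun_prop : Continuous _).aestronglyMeasurable)
    (integrable_mul_exp_neg_abs (by fun_prop) fun w => hM₀ (x - s * w))
    (by fun_prop : Continuous _).aestronglyMeasurable
    (ae_of_all _ fun w y _ => ?_) (integrable_exp_neg_abs.const_mul M₁)
    (ae_of_all _ fun w y _ => ?_)).2
  · rw [norm_mul, Real.norm_eq_abs, Real.norm_of_nonneg (exp_pos _).le]
    exact mul_le_mul_of_nonneg_right (hM₁ _) (exp_pos _).le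
  · exact ((hg _).hasDerivAt.comp_sub_const y (s * w)).mul_const _

lemma hasDerivAt_integral_dilate_mul_exp_neg_abs (hg : Differentiable ℝ g)
    (hM₀ : ∀ y, |g y| ≤ M₀) (hg' : Continuous (deriv g)) (hM₁ : ∀ y, |deriv g y| ≤ M₁)
    (x s : ℝ) :
    HasDerivAt (fun σ => ∫ w, g (x - σ * w) * exp (-|w|))
      (∫ w, deriv g (x - s * w) * -w * exp (-|w|)) s := by
  have hgc := hg.continuous
  refine (hasDerivAt_integral_of_dominated_loc_of_deriv_le
    (F := fun σ w => g (x - σ * w) * exp (-|w|))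
    (F' := fun σ w => deriv g (x - σ * w) * -w * exp (-|w|))
    (bound := fun w => M₁ * (|w| * exp (-|w|)))
    univ_mem (Eventually.of_forall fun τ => (by fun_prop : Continuous _).aestronglyMeasurable)
    (integrable_mul_exp_neg_abs (by fun_prop) fun w => hM₀ (x - s * w))
    (by fun_prop : Continuous _).aestronglyMeasurable
    (ae_of_all _ fun w τ _ => ?_) (integrable_abs_mul_exp_neg_abs.const_mul M₁)
    (ae_of_all _ fun w τ _ => ?_)).2
  · rw [norm_mul, norm_mul, norm_neg, Real.norm_eq_abs, Real.norm_eq_abs,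
      Real.norm_of_nonneg (exp_pos _).le, mul_assoc]
    exact mul_le_mul_of_nonneg_right (hM₁ _) (by positivity)
  · exact ((hg _).hasDerivAt.comp τ ((hasDerivAt_mul_const w).const_sub x)).mul_const _

lemma picardConv_eq_integral_mul_exp_neg_abs (g : ℝ → ℝ) {s : ℝ} (hs : 0 < s) (x : ℝ) :
    picardConv g s x = 2⁻¹ * ∫ w, g (x - s * w) * exp (-|w|) := by
  have h := Measure.integral_comp_mul_left (fun v => g (x - v) * exp (-|v| / s)) s
  simp only [abs_mul, abs_of_pos hs, neg_div, mul_div_cancel_left₀ _ hs.ne', smul_eq_mul,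
    abs_of_pos (inv_pos.mpr hs)] at h
  rw [picardConv, h]
  field_simp

lemma hasDerivAt_picardConv (hg : Differentiable ℝ g) (hM₀ : ∀ y, |g y| ≤ M₀)
    (hg' : Continuous (deriv g)) (hM₁ : ∀ y, |deriv g y| ≤ M₁) {s : ℝ} (hs : 0 < s) (x : ℝ) :
    HasDerivAt (picardConv g s) (picardConv (deriv g) s x) x := by
  have e : picardConv g s = fun y => 2⁻¹ * ∫ w, g (y - s * w) * exp (-|w|) :=
    funext (picardConv_eq_integral_mul_exp_neg_abs g hs)
  rw [e, picardConv_eq_integral_mul_exp_neg_abs _ hs]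
  exact (hasDerivAt_integral_shift_mul_exp_neg_abs hg hM₀ hg' hM₁ s x).const_mul _

lemma picardConv_deriv_deriv (hg : Differentiable ℝ g) (hg' : Differentiable ℝ (deriv g))
    (hg'' : Continuous (deriv (deriv g))) (hM₀ : ∀ y, |g y| ≤ M₀)
    (hM₁ : ∀ y, |deriv g y| ≤ M₁) (hM₂ : ∀ y, |deriv (deriv g) y| ≤ M₂)
    {s : ℝ} (hs : 0 < s) (x : ℝ) :
    picardConv (deriv (deriv g)) s x = (picardConv g s x - g x) / s ^ 2 := by
  have hgc := hg.continuous
  have hInner : ∀ w, HasDerivAt (fun w => x - s * w) (-s) w := fun w => by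
    simpa using ((hasDerivAt_id' w).const_mul s).const_sub x
  have hOuter : ∀ w, HasDerivAt (fun w => x + s * w) s w := fun w => by
    simpa using ((hasDerivAt_id' w).const_mul s).const_add x
  have hH : ∀ w, HasDerivAt (fun w => g (x - s * w) + g (x + s * w))
      (s * (deriv g (x + s * w) - deriv g (x - s * w))) w := fun w =>
    (((hg _).hasDerivAt.comp w (hInner w)).add ((hg _).hasDerivAt.comp w (hOuter w))).congr_deriv
      (by ring)
  have hH' : ∀ w, HasDerivAt (fun w => s * (deriv g (x + s * w) - deriv g (x - s * w)))
      (s ^ 2 * (deriv (deriv g) (x - s * w) + deriv (deriv g) (x + s * w))) w := fun w =>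
    ((((hg' _).hasDerivAt.comp w (hOuter w)).sub
      ((hg' _).hasDerivAt.comp w (hInner w))).const_mul s).congr_deriv (by ring)
  have hLaplace := integral_Ioi_deriv_deriv_mul_exp_neg_mul one_pos hH hH'
    (fun w => (abs_add_le _ _).trans (add_le_add (hM₀ _) (hM₀ _)))
    (fun w => by
      rw [abs_mul]
      exact mul_le_mul_of_nonneg_left ((abs_sub _ _).trans (add_le_add (hM₁ _) (hM₁ _)))
        (abs_nonneg s))
    (by fun_prop)
    (fun w => by
      rw [abs_mul, abs_of_nonneg (sq_nonneg s)]
      exact mul_le_mul_of_nonneg_left ((abs_add_le _ _).trans (add_le_add (hM₂ _) (hM₂ _)))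
        (sq_nonneg s))
  simp only [neg_mul, one_mul, one_pow, mul_zero, sub_zero, add_zero, sub_self, mul_assoc,
    integral_const_mul] at hLaplace
  rw [picardConv_eq_integral_mul_exp_neg_abs _ hs, picardConv_eq_integral_mul_exp_neg_abs _ hs,
    integral_mul_exp_neg_abs_eq_integral_Ioi
      (integrable_mul_exp_neg_abs (by fun_prop) fun w => hM₂ (x - s * w)),
    integral_mul_exp_neg_abs_eq_integral_Ioi
      (integrable_mul_exp_neg_abs (by fun_prop) fun w => hM₀ (x - s * w))]
  simp only [mul_neg, sub_neg_eq_add]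
  rw [eq_div_iff (by positivity)]
  linear_combination hLaplace / 2

lemma iteratedDeriv_two_picardConv (hg : Differentiable ℝ g) (hg' : Differentiable ℝ (deriv g))
    (hg'' : Continuous (deriv (deriv g))) (hM₀ : ∀ y, |g y| ≤ M₀)
    (hM₁ : ∀ y, |deriv g y| ≤ M₁) (hM₂ : ∀ y, |deriv (deriv g) y| ≤ M₂)
    {s : ℝ} (hs : 0 < s) (x : ℝ) :
    iteratedDeriv 2 (picardConv g s) x = (picardConv g s x - g x) / s ^ 2 := by
  have hderiv : deriv (picardConv g s) = picardConv (deriv g) s :=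
    funext fun y => (hasDerivAt_picardConv hg hM₀ hg'.continuous hM₁ hs y).deriv
  rw [iteratedDeriv_succ, iteratedDeriv_one, hderiv,
    (hasDerivAt_picardConv hg' hM₁ hg'' hM₂ hs x).deriv,
    picardConv_deriv_deriv hg hg' hg'' hM₀ hM₁ hM₂ hs x]

lemma differentiableAt_picardConv_scale (hg : Differentiable ℝ g) (hM₀ : ∀ y, |g y| ≤ M₀)
    (hg' : Continuous (deriv g)) (hM₁ : ∀ y, |deriv g y| ≤ M₁) {s : ℝ} (hs : 0 < s) (x : ℝ) :
    DifferentiableAt ℝ (fun σ => picardConv g σ x) s := by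
  refine (((hasDerivAt_integral_dilate_mul_exp_neg_abs hg hM₀ hg' hM₁ x s).const_mul
    2⁻¹).differentiableAt).congr_of_eventuallyEq ?_
  filter_upwards [Ioi_mem_nhds hs] with σ hσ
  exact picardConv_eq_integral_mul_exp_neg_abs g hσ x

lemma tendsto_picardConv_nhdsGT_zero (hg : Differentiable ℝ g) (hM₀ : ∀ y, |g y| ≤ M₀)
    (hg' : Continuous (deriv g)) (hM₁ : ∀ y, |deriv g y| ≤ M₁) (x : ℝ) :
    Tendsto (fun σ => picardConv g σ x) (𝓝[>] 0) (𝓝 (g x)) := by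
  have hcont := ((hasDerivAt_integral_dilate_mul_exp_neg_abs hg hM₀ hg' hM₁ x 0).const_mul
    2⁻¹).continuousAt
  have h0 : 2⁻¹ * ∫ w, g (x - 0 * w) * exp (-|w|) = g x := by
    simp only [zero_mul, sub_zero, integral_const_mul, integral_exp_neg_abs]
    ring
  rw [ContinuousAt, h0] at hcont
  refine (hcont.mono_left nhdsWithin_le_nhds).congr' ?_
  filter_upwards [self_mem_nhdsWithin] with σ hσ
  exact (picardConv_eq_integral_mul_exp_neg_abs g hσ x).symm

end Bounded

lemma deriv_eq_sq_mul_deriv_div_sq_add {u : ℝ → ℝ} {t : ℝ} (hu : DifferentiableAt ℝ u t)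
    (ht : t ≠ 0) {a : ℝ} (ha : a ≠ 0) (c : ℝ) :
    deriv u t = a ^ 2 * t ^ 2 * deriv (fun s => (u s - c) / (a * s) ^ 2) t +
      2 * a ^ 2 * t * ((u t - c) / (a * t) ^ 2) := by
  have hquot : HasDerivAt (fun s => (u s - c) / (a * s) ^ 2) _ t :=
    (hu.hasDerivAt.sub_const c).div (((hasDerivAt_id' t).const_mul a).pow 2)
      (pow_ne_zero 2 (mul_ne_zero ha ht))
  rw [hquot.deriv]
  field_simp
  ring

theorem jackson_picard_component_ivp_general
    (f : ℝ → ℝ)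
    (hf_diff : ∀ i < 2, Differentiable ℝ (iteratedDeriv i f))
    (hf_bdd : ∀ i ≤ 2, ∃ M : ℝ, ∀ x : ℝ, |iteratedDeriv i f x| ≤ M)
    (hf_uc : ∀ i ≤ 2, UniformContinuous (iteratedDeriv i f))
    (k : ℕ) (hk : 1 ≤ k) :
    (∀ t > (0 : ℝ), ∀ x : ℝ,
        deriv (fun s => picardConv f (k * s) x) t =
          (k : ℝ) ^ 2 * t ^ 2 *
              deriv (fun s => iteratedDeriv 2 (fun y => picardConv f (k * s) y) x) t +
            2 * (k : ℝ) ^ 2 * t * iteratedDeriv 2 (fun y => picardConv f (k * t) y) x) ∧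
      (∀ x : ℝ, Tendsto (fun s : ℝ => picardConv f (k * s) x)
        (nhdsWithin 0 (Set.Ioi 0)) (nhds (f x))) := by
  have h2 : iteratedDeriv 2 f = deriv (deriv f) := by rw [iteratedDeriv_succ, iteratedDeriv_one]
  have hf : Differentiable ℝ f := by simpa using hf_diff 0 (by norm_num)
  have hf' : Differentiable ℝ (deriv f) := by simpa using hf_diff 1 (by norm_num)
  have hf'' : Continuous (deriv (deriv f)) := h2 ▸ (hf_uc 2 le_rfl).continuous
  obtain ⟨M₀, hM₀⟩ : ∃ M, ∀ y, |f y| ≤ M := by simpa using hf_bdd 0 (by norm_num)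
  obtain ⟨M₁, hM₁⟩ : ∃ M, ∀ y, |deriv f y| ≤ M := by simpa using hf_bdd 1 (by norm_num)
  obtain ⟨M₂, hM₂⟩ : ∃ M, ∀ y, |deriv (deriv f) y| ≤ M := h2 ▸ hf_bdd 2 le_rfl
  have hk₀ : (0 : ℝ) < k := by exact_mod_cast hk
  have hxx : ∀ s > 0, ∀ x, iteratedDeriv 2 (fun y => picardConv f (k * s) y) x =
      (picardConv f (k * s) x - f x) / (k * s) ^ 2 := fun s hs x =>
    iteratedDeriv_two_picardConv hf hf' hf'' hM₀ hM₁ hM₂ (mul_pos hk₀ hs) x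
  refine ⟨fun t ht x => ?_, fun x => ?_⟩
  · have hu : DifferentiableAt ℝ (fun s => picardConv f (k * s) x) t :=
      (differentiableAt_picardConv_scale hf hM₀ hf'.continuous hM₁ (mul_pos hk₀ ht) x).comp t
        (differentiableAt_id.const_mul _)
    have hnear : (fun s => iteratedDeriv 2 (fun y => picardConv f (k * s) y) x) =ᶠ[𝓝 t]
        fun s => (picardConv f (k * s) x - f x) / (k * s) ^ 2 := by
      filter_upwards [Ioi_mem_nhds ht] with s hs using hxx s hs x
    rw [hnear.deriv_eq, hxx t ht x]
    exact deriv_eq_sq_mul_deriv_div_sq_add hu ht.ne' hk₀.ne' (f x)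
  · refine (tendsto_picardConv_nhdsGT_zero hf hM₀ hf'.continuous hM₁ x).comp ?_
    refine tendsto_nhdsWithin_iff.2 ⟨?_, ?_⟩
    · simpa using ((continuous_const_mul (k : ℝ)).tendsto 0).mono_left nhdsWithin_le_nhds
    · filter_upwards [self_mem_nhdsWithin] with s hs using mul_pos hk₀ hs

theorem jackson_picard_component_ivp
    (f : ℝ → ℝ)
    (hf_diff : ∀ i < 2, Differentiable ℝ (iteratedDeriv i f))
    (hf_bdd : ∀ i ≤ 2, ∃ M : ℝ, ∀ x : ℝ, |iteratedDeriv i f x| ≤ M)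
    (hf_uc : ∀ i ≤ 2, UniformContinuous (iteratedDeriv i f))
    (hf_int : Integrable f)
    (k : ℕ) (hk : 1 ≤ k) :
    (∀ t > (0 : ℝ), ∀ x : ℝ,
        deriv (fun s => picardConv f (k * s) x) t =
          (k : ℝ) ^ 2 * t ^ 2 *
              deriv (fun s => iteratedDeriv 2 (fun y => picardConv f (k * s) y) x) t +
            2 * (k : ℝ) ^ 2 * t * iteratedDeriv 2 (fun y => picardConv f (k * t) y) x) ∧
      (∀ x : ℝ, Tendsto (fun s : ℝ => picardConv f (k * s) x)
        (nhdsWithin 0 (Set.Ioi 0)) (nhds (f x))) :=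
  jackson_picard_component_ivp_general f hf_diff hf_bdd hf_uc k hk
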